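/- Let f : ℝⁿ → ℝ be C² and let Ω be the open set of points x that are regular points of f and at which the Weingarten map d_xν_f|_{T_x f⁻¹(f(x))} is invertible. Define Ψ_f : Ω → S^{n−1} × ℝ by Ψ_f(x) = (ν_f(x), f(x)), where ν_f = ∇f/|∇f|. Then Ψ_f is a local diffeomorphism at every point of Ω; in particular Ψ_f(Ω) is open in S^{n−1} × ℝ. -/

import Mathlib

/-!
Extend `Ψ_f` to the map `Φ (y, t) = ((1 + t) • ν_f y, f y)` between spaces of equal dimension.
Its differential at `(y, 0)` is `(ξ, s) ↦ (dν_f ξ + s • ν_f y, df ξ)`, and since `dν_f ξ ⊥ ν_f y`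
this is injective exactly when the Weingarten map is; in particular `Ω` is open, being cut out by
an open condition on a continuous differential. At a point of `Ω` the inverse function theorem
gives a `C¹` local inverse of `Φ`, which we restrict to `t > -1`; there `‖(1 + t) • ν_f y‖ = 1`
forces `t = 0`, so the part of its target lying over `S^{n-1} × ℝ` is exactly the image of `Ψ_f`.
-/

open scoped RealInnerProductSpace
open Set Metric

open Filter Topology Function
open scoped ContDiff

theorem isOpen_preimage_image_of_forall_exists {X Y Z : Type*} [TopologicalSpace Z] {g : X → Y}
    {π : Z → Y} {Ω : Set X} (h : ∀ x ∈ Ω, ∃ V ⊆ Ω, x ∈ V ∧ IsOpen (π ⁻¹' (g '' V))) :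
    IsOpen (π ⁻¹' (g '' Ω)) := by
  refine isOpen_iff_forall_mem_open.2 fun p ⟨x, hx, hxp⟩ => ?_
  obtain ⟨V, hVΩ, hxV, hV⟩ := h x hx
  exact ⟨_, preimage_mono (image_mono hVΩ), hV, x, hxV, hxp⟩

section InverseFunction

variable {𝕂 : Type*} [RCLike 𝕂] {E F : Type*} [NormedAddCommGroup E] [NormedSpace 𝕂 E]
  [CompleteSpace E] [NormedAddCommGroup F] [NormedSpace 𝕂 F]

theorem ContDiffAt.exists_openPartialHomeomorph_contDiffOn_symm {f : E → F} {f' : E ≃L[𝕂] F}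
    {a : E} {n : WithTop ℕ∞} (hf : ContDiffAt 𝕂 n f a) (hf' : HasFDerivAt f (f' : E →L[𝕂] F) a)
    (hn : n ≠ 0) (hn' : n ≠ ∞) {s : Set E} (hs : IsOpen s) (ha : a ∈ s) :
    ∃ h : OpenPartialHomeomorph E F, ⇑h = f ∧ a ∈ h.source ∧ h.source ⊆ s ∧
      ContDiffOn 𝕂 n h.symm h.target := by
  set h₀ := hf.toOpenPartialHomeomorph f hf' hn
  have ha₀ : a ∈ h₀.source := hf.mem_toOpenPartialHomeomorph_source hf' hn
  obtain ⟨W, hW, hWo, hfaW⟩ := _root_.mem_nhds_iff.1 ((hf.to_localInverse hf' hn).eventually hn')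
  have hs' : IsOpen (s ∩ (h₀.source ∩ f ⁻¹' W)) := hs.inter (h₀.isOpen_inter_preimage hWo)
  refine ⟨h₀.restrOpen _ hs', rfl, ⟨ha₀, ha, ha₀, hfaW⟩, fun _ hx => hx.2.1, ?_⟩
  rintro b ⟨hb, -, -, hbW⟩
  have hfb : f (h₀.symm b) = b := h₀.right_inv hb
  exact (hW (hfb ▸ hbW)).contDiffWithinAt

end InverseFunction

def radialExtension {E F G : Type*} [SMul ℝ F] (ν : E → F) (f : E → G) (p : E × ℝ) : F × G :=
  ((1 + p.2) • ν p.1, f p.1)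

@[simp]
theorem radialExtension_zero {E F G : Type*} [MulAction ℝ F] (ν : E → F) (f : E → G) (y : E) :
    radialExtension ν f (y, 0) = (ν y, f y) := by
  simp [radialExtension]

theorem OpenPartialHomeomorph.sphere_inter_image_slice_eq_target {E F G : Type*}
    [TopologicalSpace E] [NormedAddCommGroup F] [NormedSpace ℝ F] [TopologicalSpace G]
    {ν : E → F} {f : E → G}
    (h : OpenPartialHomeomorph (E × ℝ) (F × G)) (hh : ⇑h = radialExtension ν f)
    (hsrc : ∀ q ∈ h.source, ‖ν q.1‖ = 1 ∧ -1 < q.2) :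
    {p : sphere (0 : F) 1 × G | ((p.1 : F), p.2) ∈ (fun y => (ν y, f y)) '' {y | (y, 0) ∈ h.source}}
      = (fun p : sphere (0 : F) 1 × G => ((p.1 : F), p.2)) ⁻¹' h.target := by
  ext p
  constructor
  · rintro ⟨y, hy, hyp⟩
    have hhy : h (y, 0) = ((p.1 : F), p.2) := by rw [hh, radialExtension_zero]; exact hyp
    exact (hhy ▸ h.map_source hy : ((p.1 : F), p.2) ∈ h.target)
  · intro hp
    set q := h.symm ((p.1 : F), p.2)
    have hqs : q ∈ h.source := h.map_target hp
    have hq : radialExtension ν f q = ((p.1 : F), p.2) := hh ▸ h.right_inv hp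
    obtain ⟨hνq, hq2⟩ := hsrc q hqs
    have hnorm : |1 + q.2| = 1 := by
      simpa [radialExtension, norm_smul, hνq] using congrArg (‖·.1‖) hq
    have hq0 : q = (q.1, 0) := Prod.ext rfl (by rw [abs_of_pos (by linarith)] at hnorm; linarith)
    refine ⟨q.1, show (q.1, (0 : ℝ)) ∈ h.source by rwa [← hq0], ?_⟩
    show (ν q.1, f q.1) = _
    rw [← radialExtension_zero, ← hq0, hq]

section Differentiability

variable {E F G : Type*} [NormedAddCommGroup E] [NormedSpace ℝ E] [NormedAddCommGroup F]
  [NormedSpace ℝ F] [NormedAddCommGroup G] [NormedSpace ℝ G] {ν : E → F} {f : E → G}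

theorem ContDiffAt.radialExtension {n : WithTop ℕ∞} {y : E} (t : ℝ) (hν : ContDiffAt ℝ n ν y)
    (hf : ContDiffAt ℝ n f y) : ContDiffAt ℝ n (radialExtension ν f) (y, t) :=
  ((contDiffAt_const.add contDiffAt_snd).smul (hν.comp _ contDiffAt_fst)).prodMk
    (hf.comp _ contDiffAt_fst)

def radialExtensionFDeriv (ν' : E →L[ℝ] F) (v : F) (f' : E →L[ℝ] G) : E × ℝ →L[ℝ] F × G :=
  (ν'.comp (.fst ℝ E ℝ) + (ContinuousLinearMap.snd ℝ E ℝ).smulRight v).prod (f'.comp (.fst ℝ E ℝ))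

@[simp]
theorem radialExtensionFDeriv_apply (ν' : E →L[ℝ] F) (v : F) (f' : E →L[ℝ] G) (ξ : E) (s : ℝ) :
    radialExtensionFDeriv ν' v f' (ξ, s) = (ν' ξ + s • v, f' ξ) :=
  rfl

theorem HasFDerivAt.radialExtension {ν' : E →L[ℝ] F} {f' : E →L[ℝ] G} {y : E}
    (hν : HasFDerivAt ν ν' y) (hf : HasFDerivAt f f' y) :
    HasFDerivAt (radialExtension ν f) (radialExtensionFDeriv ν' (ν y) f') (y, 0) := by
  have hfst : HasFDerivAt (Prod.fst : E × ℝ → E) (.fst ℝ E ℝ) (y, 0) := hasFDerivAt_fst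
  have hsnd : HasFDerivAt (Prod.snd : E × ℝ → ℝ) (.snd ℝ E ℝ) (y, 0) := hasFDerivAt_snd
  have := ((hsnd.const_add (1 : ℝ)).smul (hν.comp (y, 0) hfst)).prodMk (hf.comp (y, 0) hfst)
  exact this.congr_fderiv (ContinuousLinearMap.ext fun ⟨ξ, s⟩ => by simp)

end Differentiability

section Injectivity

variable {E F G : Type*} [NormedAddCommGroup E] [NormedSpace ℝ E] [NormedAddCommGroup F]
  [InnerProductSpace ℝ F] [NormedAddCommGroup G] [NormedSpace ℝ G]

theorem injective_radialExtensionFDeriv_iff {ν' : E →L[ℝ] F} {v : F} {f' : E →L[ℝ] G}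
    (hv : ‖v‖ = 1) (hν' : ∀ ξ, ⟪ν' ξ, v⟫ = 0) :
    Injective (radialExtensionFDeriv ν' v f') ↔ ∀ ξ, f' ξ = 0 → ν' ξ = 0 → ξ = 0 := by
  rw [injective_iff_map_eq_zero]
  constructor
  · intro hinj ξ hf' hν'ξ
    simpa using congrArg Prod.fst (hinj (ξ, 0) (by simp [hf', hν'ξ]))
  · rintro hker ⟨ξ, s⟩ h
    simp only [radialExtensionFDeriv_apply, Prod.mk_eq_zero] at h
    have hs : s = 0 := by
      simpa [inner_add_left, real_inner_smul_left, hν', real_inner_self_eq_norm_sq, hv]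
        using congrArg (⟪·, v⟫) h.1
    subst hs
    simp only [zero_smul, add_zero] at h
    simp [hker ξ h.2 h.1]

end Injectivity

section GaussMap

variable {E : Type*} [NormedAddCommGroup E] [InnerProductSpace ℝ E]

theorem inner_fderiv_apply_self_eq_zero {G : Type*} [NormedAddCommGroup G] [NormedSpace ℝ G]
    {ν : G → E} {x : G} (hν : DifferentiableAt ℝ ν x) (h1 : ∀ᶠ y in 𝓝 x, ‖ν y‖ = 1) (ξ : G) :
    ⟪fderiv ℝ ν x ξ, ν x⟫ = 0 := by
  have hsq : HasFDerivAt (‖ν ·‖ ^ 2) (0 : G →L[ℝ] ℝ) x :=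
    (hasFDerivAt_const (1 : ℝ) x).congr_of_eventuallyEq (h1.mono fun y hy => by simp [hy])
  simpa [real_inner_comm] using congrArg (· ξ) (hν.hasFDerivAt.norm_sq.unique hsq)

variable [CompleteSpace E] {f : E → ℝ} {m n : WithTop ℕ∞} {y : E}

theorem ContDiff.gradient (hf : ContDiff ℝ n f) (hmn : m + 1 ≤ n) : ContDiff ℝ m (gradient f) :=
  (InnerProductSpace.toDual ℝ E).symm.contDiff.comp (hf.fderiv_right hmn)

noncomputable def gaussMap (f : E → ℝ) (y : E) : E :=
  ‖gradient f y‖⁻¹ • gradient f y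

theorem norm_gaussMap (hy : gradient f y ≠ 0) : ‖gaussMap f y‖ = 1 := by
  rw [gaussMap, norm_smul, norm_inv, norm_norm, inv_mul_cancel₀ (norm_ne_zero_iff.2 hy)]

theorem contDiffAt_gaussMap (hf : ContDiff ℝ n f) (hmn : m + 1 ≤ n) (hy : gradient f y ≠ 0) :
    ContDiffAt ℝ m (gaussMap f) y :=
  have hg := (hf.gradient hmn).contDiffAt (x := y)
  ((hg.norm ℝ hy).inv (norm_ne_zero_iff.2 hy)).smul hg

theorem inner_fderiv_gaussMap_apply (hf : ContDiff ℝ 2 f) (hy : gradient f y ≠ 0) (ξ : E) :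
    ⟪fderiv ℝ (gaussMap f) y ξ, gaussMap f y⟫ = 0 := by
  refine inner_fderiv_apply_self_eq_zero
    ((contDiffAt_gaussMap hf one_add_one_eq_two.le hy).differentiableAt one_ne_zero) ?_ ξ
  filter_upwards [(hf.gradient one_add_one_eq_two.le).continuous.continuousAt.eventually_ne hy]
    with z hz
  exact norm_gaussMap hz

theorem hasFDerivAt_radialExtension_gaussMap (hf : ContDiff ℝ 2 f) (hy : gradient f y ≠ 0) :
    HasFDerivAt (radialExtension (gaussMap f) f)
      (radialExtensionFDeriv (fderiv ℝ (gaussMap f) y) (gaussMap f y) (fderiv ℝ f y)) (y, 0) :=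
  ((contDiffAt_gaussMap hf one_add_one_eq_two.le hy).differentiableAt
    one_ne_zero).hasFDerivAt.radialExtension ((hf.differentiable (by simp)) y).hasFDerivAt

def weingartenRegularSet (f : E → ℝ) : Set E :=
  {x | gradient f x ≠ 0 ∧
    ∀ ξ : E, ⟪ξ, gradient f x⟫ = 0 → fderiv ℝ (gaussMap f) x ξ = 0 → ξ = 0}

end GaussMap

section WeingartenRegularSet

variable {E : Type*} [NormedAddCommGroup E] [InnerProductSpace ℝ E] [FiniteDimensional ℝ E]
  {f : E → ℝ} {x y : E}

theorem mem_weingartenRegularSet_iff_isUnit (hf : ContDiff ℝ 2 f) (hy : gradient f y ≠ 0) :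
    y ∈ weingartenRegularSet f ↔
      IsUnit (radialExtensionFDeriv (fderiv ℝ (gaussMap f) y) (gaussMap f y) (fderiv ℝ f y)) := by
  set A := radialExtensionFDeriv (fderiv ℝ (gaussMap f) y) (gaussMap f y) (fderiv ℝ f y)
  have hsurj : Injective A → Surjective A :=
    LinearMap.injective_iff_surjective (f := (A : E × ℝ →ₗ[ℝ] E × ℝ)).1
  rw [ContinuousLinearMap.isUnit_iff_bijective, Bijective, and_iff_left_of_imp hsurj,
    injective_radialExtensionFDeriv_iff (norm_gaussMap hy) (inner_fderiv_gaussMap_apply hf hy)]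
  simp only [weingartenRegularSet, mem_ofPred_eq, real_inner_comm (gradient f y),
    inner_gradient_left, hy, ne_eq, not_false_eq_true, true_and]

theorem contDiffAt_radialExtension_gaussMap (hf : ContDiff ℝ 2 f) (hy : gradient f y ≠ 0)
    (t : ℝ) : ContDiffAt ℝ 1 (radialExtension (gaussMap f) f) (y, t) :=
  (contDiffAt_gaussMap hf one_add_one_eq_two.le hy).radialExtension t
    (hf.of_le one_le_two).contDiffAt

theorem isOpen_weingartenRegularSet (hf : ContDiff ℝ 2 f) : IsOpen (weingartenRegularSet f) := by
  set U := {y | gradient f y ≠ 0}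
  have hU : IsOpen U :=
    isOpen_ne_fun (hf.gradient one_add_one_eq_two.le).continuous continuous_const
  have hΩ : weingartenRegularSet f =
      U ∩ (fun y => fderiv ℝ (radialExtension (gaussMap f) f) (y, 0)) ⁻¹' {T | IsUnit T} := by
    ext y
    refine ⟨fun hy => ⟨hy.1, ?_⟩, fun hy => ?_⟩
    · rw [mem_preimage, (hasFDerivAt_radialExtension_gaussMap hf hy.1).fderiv]
      exact (mem_weingartenRegularSet_iff_isUnit hf hy.1).1 hy
    · obtain ⟨hyU, hyA⟩ := hy
      rw [mem_preimage, (hasFDerivAt_radialExtension_gaussMap hf hyU).fderiv] at hyA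
      exact (mem_weingartenRegularSet_iff_isUnit hf hyU).2 hyA
  rw [hΩ]
  refine ContinuousOn.isOpen_inter_preimage (fun y hy => ContinuousAt.continuousWithinAt ?_) hU
    (Units.isOpen (R := E × ℝ →L[ℝ] E × ℝ))
  exact ((contDiffAt_radialExtension_gaussMap hf hy 0).continuousAt_fderiv one_ne_zero).comp
    (f := fun z => (z, 0)) (by fun_prop)

theorem exists_isOpen_injOn_contDiffOn_leftInverse (hf : ContDiff ℝ 2 f)
    (hx : x ∈ weingartenRegularSet f) :
    ∃ V : Set E, IsOpen V ∧ x ∈ V ∧ V ⊆ weingartenRegularSet f ∧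
      InjOn (fun y => (gaussMap f y, f y)) V ∧
      IsOpen {p : sphere (0 : E) 1 × ℝ |
        ((p.1 : E), p.2) ∈ (fun y => (gaussMap f y, f y)) '' V} ∧
      ∃ ψ : E × ℝ → E, ContDiffOn ℝ 1 ψ ((fun y => (gaussMap f y, f y)) '' V) ∧
        ∀ y ∈ V, ψ (gaussMap f y, f y) = y := by
  obtain ⟨u, hu⟩ := (mem_weingartenRegularSet_iff_isUnit hf hx.1).1 hx
  have hΦ' : HasFDerivAt (radialExtension (gaussMap f) f)
      (ContinuousLinearEquiv.unitsEquiv ℝ _ u : E × ℝ →L[ℝ] E × ℝ) (x, 0) :=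
    (hasFDerivAt_radialExtension_gaussMap hf hx.1).congr_fderiv hu.symm
  obtain ⟨h, hh, hxh, hsrc, hsymm⟩ :=
    (contDiffAt_radialExtension_gaussMap hf hx.1 0).exists_openPartialHomeomorph_contDiffOn_symm
      hΦ' one_ne_zero (by simp) ((isOpen_weingartenRegularSet hf).prod isOpen_Ioi)
      ⟨hx, mem_Ioi.2 neg_one_lt_zero⟩
  have hΨ : ∀ y, (gaussMap f y, f y) = h (y, 0) := by simp [hh]
  refine ⟨{y | (y, 0) ∈ h.source}, h.open_source.preimage (by fun_prop), hxh,
    fun y hy => (hsrc hy).1, fun y₁ hy₁ y₂ hy₂ heq => ?_, ?_, fun p => (h.symm p).1, ?_,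
    fun y hy => by simp [hΨ, h.left_inv hy]⟩
  · simp only [hΨ] at heq
    exact congrArg Prod.fst (h.injOn hy₁ hy₂ heq)
  · rw [h.sphere_inter_image_slice_eq_target hh
      fun q hq => ⟨norm_gaussMap (hsrc hq).1.1, (hsrc hq).2⟩]
    exact h.open_target.preimage (by fun_prop)
  · refine contDiff_fst.comp_contDiffOn (hsymm.mono ?_)
    rintro _ ⟨y, hy, rfl⟩
    show (gaussMap f y, f y) ∈ h.target
    rw [hΨ]
    exact h.map_source hy

end WeingartenRegularSet

/-- Let `f : ℝⁿ → ℝ` be `C²` and `Ω` the open set of regular points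
`x` of `f` at which the Weingarten map `d_xν_f|_{T_x f⁻¹(f x)}` (the restriction of the
differential of the Gauss map `ν_f = ∇f/‖∇f‖` to the hyperplane `(∇f x)^⊥`) is
invertible.  Define `Ψ_f : Ω → S^{n-1} × ℝ` by `Ψ_f x = (ν_f x, f x)`.  Then `Ψ_f` is a
local diffeomorphism at every point of `Ω` (locally injective with open image in
`S^{n-1} × ℝ` and a `C¹` local inverse); in particular `Ψ_f(Ω)` is open in
`S^{n-1} × ℝ`. -/
theorem statement6
    (n : ℕ) (f : EuclideanSpace ℝ (Fin n) → ℝ)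
    (hf : ContDiff ℝ 2 f)
    (ν : EuclideanSpace ℝ (Fin n) → EuclideanSpace ℝ (Fin n))
    (hν : ∀ y, ν y = ‖gradient f y‖⁻¹ • gradient f y)
    (Ψ : EuclideanSpace ℝ (Fin n) → (EuclideanSpace ℝ (Fin n)) × ℝ)
    (hΨ : ∀ y, Ψ y = (ν y, f y))
    (Ω : Set (EuclideanSpace ℝ (Fin n)))
    (hΩ : Ω = {x | gradient f x ≠ 0 ∧
      ∀ ξ : EuclideanSpace ℝ (Fin n),
        ⟪ξ, gradient f x⟫ = 0 → (fderiv ℝ ν x) ξ = 0 → ξ = 0}) :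
    IsOpen Ω ∧
    (∀ x ∈ Ω, ∃ V : Set (EuclideanSpace ℝ (Fin n)),
      IsOpen V ∧ x ∈ V ∧ V ⊆ Ω ∧ Set.InjOn Ψ V ∧
      -- the image of `V` is open in `S^{n-1} × ℝ`
      IsOpen {p : sphere (0 : EuclideanSpace ℝ (Fin n)) 1 × ℝ |
        ((p.1 : EuclideanSpace ℝ (Fin n)), p.2) ∈ Ψ '' V} ∧
      -- with a `C¹` local inverse
      ∃ ψ : (EuclideanSpace ℝ (Fin n)) × ℝ → EuclideanSpace ℝ (Fin n),
        ContDiffOn ℝ 1 ψ (Ψ '' V) ∧ ∀ y ∈ V, ψ (Ψ y) = y) ∧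
    -- in particular `Ψ_f(Ω)` is open in `S^{n-1} × ℝ`
    IsOpen {p : sphere (0 : EuclideanSpace ℝ (Fin n)) 1 × ℝ |
      ((p.1 : EuclideanSpace ℝ (Fin n)), p.2) ∈ Ψ '' Ω} := by
  obtain rfl : ν = gaussMap f := funext hν
  obtain rfl : Ψ = fun y => (gaussMap f y, f y) := funext hΨ
  obtain rfl : Ω = weingartenRegularSet f := hΩ
  have hloc := fun x (hx : x ∈ weingartenRegularSet f) =>
    exists_isOpen_injOn_contDiffOn_leftInverse hf hx
  refine ⟨isOpen_weingartenRegularSet hf, hloc, isOpen_preimage_image_of_forall_exists ?_⟩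
  intro x hx
  obtain ⟨V, -, hxV, hVΩ, -, hV, -⟩ := hloc x hx
  exact ⟨V, hVΩ, hxV, hV⟩
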